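/- arXiv:2107.12971 — 4 statements merged into one kernel-verified Lean document; each statement's English description precedes it below -/
import Mathlib

section
/- Let d ≥ 1 and a > 0. There exists a constant C = C(d,a) > 0 such that for every integer r ≥ 2, every real ν > 0, and every x ∈ ℤ^d with ‖x‖_∞ ≤ r/2, one has ∑_{u ∈ ℤ^d, u ≠ 0} ‖x + r·u‖_∞^{a−d} · exp(−ν‖x + r·u‖_∞) ≤ C · ν^{−a} · r^{−d} · exp(−νr/4). -/
/-!
Since `‖x‖ ≤ r / 2 ≤ ‖r • u‖ / 2`, the norm `‖x + r • u‖` lies within a factor `2` of `r‖u‖`,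
and at least half of it survives in the exponential. Together with `‖u‖ ≥ 1` this bounds each
term by `2^|a-d| r^(a-d) e^(-νr/4) · ‖u‖^(a-d) e^(-c‖u‖)` with `c = νr/4`. Grouping the lattice
points by their sup norm `n`, each shell has `O(n^(d-1))` points, so the remaining lattice sum
is `O(∑ₙ n^(a-1) e^(-cn))`. Each term of this series is at most `2^|a-1|` times the integral of
`t^(a-1) e^(-ct/2)` over `[n, n+1]`, hence the series is at most `2^|a-1| Γ(a) (2/c)^a`.
-/

open Real

section OneDim

open MeasureTheory Set

lemma rpow_le_two_rpow_abs_mul_rpow {x y : ℝ} (p : ℝ) (hy : 0 < y) (hyx : y ≤ 2 * x)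
    (hxy : x ≤ 2 * y) : x ^ p ≤ 2 ^ |p| * y ^ p := by
  have hx : 0 < x := by linarith
  rw [← div_le_iff₀ (by positivity), ← div_rpow hx.le hy.le]
  rcases le_total 0 p with hp | hp
  · rw [abs_of_nonneg hp]
    exact rpow_le_rpow (by positivity) ((div_le_iff₀ hy).2 hxy) hp
  · rw [abs_of_nonpos hp, rpow_neg zero_le_two, ← inv_rpow zero_le_two]
    exact rpow_le_rpow_of_nonpos (by positivity) ((le_div_iff₀ hy).2 (by linarith)) hp

lemma integrableOn_rpow_mul_exp_neg_mul_Ioi {a c : ℝ} (ha : 0 < a) (hc : 0 < c) :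
    IntegrableOn (fun t : ℝ => t ^ (a - 1) * exp (-(c * t))) (Ioi 0) :=
  (integrableOn_rpow_mul_exp_neg_mul_rpow (s := a - 1) (by linarith) one_pos hc).congr_fun
    (fun t _ => by simp only [rpow_one, neg_mul]) measurableSet_Ioi

lemma rpow_mul_exp_le_integral {a c m : ℝ} (ha : 0 < a) (hc : 0 < c) (hm : 1 ≤ m) :
    m ^ (a - 1) * exp (-(c * m)) ≤
      2 ^ |a - 1| * ∫ t in m..m + 1, t ^ (a - 1) * exp (-(c / 2 * t)) := by
  have hint := integrableOn_rpow_mul_exp_neg_mul_Ioi ha (half_pos hc)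
  rw [← intervalIntegral.integral_const_mul]
  calc m ^ (a - 1) * exp (-(c * m)) = ∫ _ in m..m + 1, m ^ (a - 1) * exp (-(c * m)) := by simp
    _ ≤ _ := by
      refine intervalIntegral.integral_mono_on (by linarith) intervalIntegrable_const ?_ ?_
      · refine (intervalIntegrable_iff_integrableOn_Ioc_of_le (by linarith)).2 ?_
        exact (hint.mono_set (Ioc_subset_Ioi_self.trans (Ioi_subset_Ioi (by linarith)))).const_mul _
      · rintro t ⟨hmt, htm⟩
        have hpow : m ^ (a - 1) ≤ 2 ^ |a - 1| * t ^ (a - 1) :=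
          rpow_le_two_rpow_abs_mul_rpow _ (by linarith) (by linarith) (by linarith)
        have hexp : exp (-(c * m)) ≤ exp (-(c / 2 * t)) := exp_le_exp.2 (by nlinarith)
        rw [← mul_assoc]
        exact mul_le_mul hpow hexp (exp_pos _).le
          (mul_nonneg (by positivity) (rpow_nonneg (by linarith) _))

lemma sum_range_rpow_mul_exp_le {a c : ℝ} (ha : 0 < a) (hc : 0 < c) (N : ℕ) :
    ∑ n ∈ Finset.range N, ((n : ℝ) + 1) ^ (a - 1) * exp (-(c * (n + 1))) ≤
      2 ^ |a - 1| * Gamma a * (2 / c) ^ a := by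
  set g := fun t : ℝ => t ^ (a - 1) * exp (-(c / 2 * t))
  have hint : IntegrableOn g (Ioi 0) := integrableOn_rpow_mul_exp_neg_mul_Ioi ha (half_pos hc)
  have hadj := intervalIntegral.sum_integral_adjacent_intervals (f := g) (μ := volume) (n := N)
    (a := fun n : ℕ => (n : ℝ) + 1) fun k _ =>
      (intervalIntegrable_iff_integrableOn_Ioc_of_le (by simp)).2
        (hint.mono_set (Ioc_subset_Ioi_self.trans (Ioi_subset_Ioi (by positivity))))
  simp only [Nat.cast_add_one, Nat.cast_zero, zero_add] at hadj
  calc ∑ n ∈ Finset.range N, ((n : ℝ) + 1) ^ (a - 1) * exp (-(c * (n + 1)))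
      ≤ ∑ n ∈ Finset.range N, 2 ^ |a - 1| * ∫ t in (n + 1 : ℝ)..n + 1 + 1, g t :=
        Finset.sum_le_sum fun n _ => rpow_mul_exp_le_integral ha hc (by simp)
    _ = 2 ^ |a - 1| * ∫ t in Ioc 1 (N + 1 : ℝ), g t := by
      rw [← Finset.mul_sum, hadj, intervalIntegral.integral_of_le (by simp)]
    _ ≤ 2 ^ |a - 1| * ∫ t in Ioi 0, g t := by
      refine mul_le_mul_of_nonneg_left (setIntegral_mono_set hint ?_ ?_) (by positivity)
      · filter_upwards [ae_restrict_mem measurableSet_Ioi] with t ht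
        exact mul_nonneg (rpow_nonneg ht.le _) (exp_pos _).le
      · exact (Ioc_subset_Ioi_self.trans (Ioi_subset_Ioi zero_le_one)).eventuallyLE
    _ = 2 ^ |a - 1| * Gamma a * (2 / c) ^ a := by
      rw [integral_rpow_mul_exp_neg_mul_Ioi ha (half_pos hc), one_div_div]; ring

end OneDim

lemma rpow_norm_add_mul_exp_le {E : Type*} [SeminormedAddGroup E] {x w : E} (p : ℝ) {ν : ℝ}
    (hν : 0 ≤ ν) (hw : 0 < ‖w‖) (hx : ‖x‖ ≤ ‖w‖ / 2) :
    ‖x + w‖ ^ p * exp (-ν * ‖x + w‖) ≤ 2 ^ |p| * ‖w‖ ^ p * exp (-ν * ‖w‖ / 2) := by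
  have hlow : ‖w‖ ≤ 2 * ‖x + w‖ := by
    have := norm_add_le (-x) (x + w)
    rw [neg_add_cancel_left, norm_neg] at this
    linarith
  have hup : ‖x + w‖ ≤ 2 * ‖w‖ := by linarith [norm_add_le x w]
  exact mul_le_mul (rpow_le_two_rpow_abs_mul_rpow p hw hlow hup) (exp_le_exp.2 (by nlinarith))
    (exp_pos _).le (by positivity)

/-- The factor `d` makes this hold also for `d = 0`, where `d - 1` truncates to `0`. -/
lemma natCast_mul_pow_sub_one_mul_rpow {x : ℝ} (hx : 0 < x) (d : ℕ) (a : ℝ) :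
    (d : ℝ) * x ^ (d - 1) * x ^ (a - d) = d * x ^ (a - 1) := by
  rcases d with _ | e
  · simp
  · rw [Nat.add_sub_cancel, mul_assoc, ← rpow_natCast, ← rpow_add hx]
    push_cast
    ring_nf

section Lattice

open Finset

variable {d : ℕ}

noncomputable def latticeBox (d n : ℕ) : Finset (Fin d → ℤ) :=
  Fintype.piFinset fun _ => Icc (-(n : ℤ)) n

noncomputable def latticeShell (d n : ℕ) : Finset (Fin d → ℤ) :=
  latticeBox d (n + 1) \ latticeBox d n

lemma mem_latticeBox {n : ℕ} {v : Fin d → ℤ} : v ∈ latticeBox d n ↔ ‖v‖ ≤ n := by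
  rw [latticeBox, Fintype.mem_piFinset, pi_norm_le_iff_of_nonneg n.cast_nonneg]
  refine forall_congr' fun i => ?_
  rw [mem_Icc, Int.norm_eq_abs, ← abs_le]
  exact_mod_cast Iff.rfl

lemma latticeBox_mono {m n : ℕ} (h : m ≤ n) : latticeBox d m ⊆ latticeBox d n := fun _ hv =>
  mem_latticeBox.2 ((mem_latticeBox.1 hv).trans (by exact_mod_cast h))

lemma add_one_le_norm_of_notMem_latticeBox {n : ℕ} {v : Fin d → ℤ} (hv : v ∉ latticeBox d n) :
    (n : ℝ) + 1 ≤ ‖v‖ := by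
  obtain ⟨i, hi⟩ : ∃ i, v i ∉ Icc (-(n : ℤ)) n := by
    simpa [latticeBox, Fintype.mem_piFinset] using hv
  rw [mem_Icc, ← abs_le, not_le] at hi
  calc (n : ℝ) + 1 ≤ ‖v i‖ := by rw [Int.norm_eq_abs]; exact_mod_cast hi
    _ ≤ ‖v‖ := norm_le_pi_norm v i

lemma one_le_norm_of_ne_zero {v : Fin d → ℤ} (hv : v ≠ 0) : 1 ≤ ‖v‖ := by
  have hv0 : v ∉ latticeBox d 0 := by
    rwa [mem_latticeBox, Nat.cast_zero, norm_le_zero_iff]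
  simpa using add_one_le_norm_of_notMem_latticeBox hv0

lemma norm_eq_of_mem_latticeShell {n : ℕ} {v : Fin d → ℤ} (hv : v ∈ latticeShell d n) :
    ‖v‖ = n + 1 := by
  rw [latticeShell, mem_sdiff, mem_latticeBox] at hv
  exact le_antisymm (by exact_mod_cast hv.1) (add_one_le_norm_of_notMem_latticeBox hv.2)

lemma card_latticeBox (d n : ℕ) : #(latticeBox d n) = (2 * n + 1) ^ d := by
  rw [latticeBox, Fintype.card_piFinset, Int.card_Icc, prod_const, card_univ, Fintype.card_fin]
  congr
  omega

lemma card_latticeShell_le (d n : ℕ) :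
    (#(latticeShell d n) : ℝ) ≤ 2 * d * 3 ^ (d - 1) * ((n : ℝ) + 1) ^ (d - 1) := by
  rw [latticeShell, card_sdiff_of_subset (latticeBox_mono n.le_succ), card_latticeBox,
    card_latticeBox, Nat.cast_sub (Nat.pow_le_pow_left (by omega) d)]
  push_cast
  have hn : (0 : ℝ) ≤ n := n.cast_nonneg
  refine (le_abs_self _).trans ((abs_pow_sub_pow_le _ _ d).trans ?_)
  rw [abs_of_nonneg (by linarith : (0 : ℝ) ≤ 2 * (n + 1) + 1),
    abs_of_nonneg (by linarith : (0 : ℝ) ≤ 2 * n + 1), max_eq_left (by linarith),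
    abs_of_nonneg (by linarith)]
  calc (2 * ((n : ℝ) + 1) + 1 - (2 * n + 1)) * d * (2 * (n + 1) + 1) ^ (d - 1)
      = 2 * d * (2 * (n + 1) + 1) ^ (d - 1) := by ring
    _ ≤ 2 * d * (3 * (n + 1)) ^ (d - 1) := by gcongr; linarith
    _ = 2 * d * 3 ^ (d - 1) * ((n : ℝ) + 1) ^ (d - 1) := by rw [mul_pow]; ring

lemma sum_latticeBox_sdiff_eq_sum_latticeShell (G : (Fin d → ℤ) → ℝ) (N : ℕ) :
    ∑ v ∈ latticeBox d N \ latticeBox d 0, G v = ∑ n ∈ range N, ∑ v ∈ latticeShell d n, G v := by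
  simp_rw [latticeShell, sum_sdiff_eq_sub (latticeBox_mono (Nat.zero_le _)),
    sum_sdiff_eq_sub (latticeBox_mono (Nat.le_succ _))]
  exact (sum_range_sub (fun n => ∑ v ∈ latticeBox d n, G v) N).symm

lemma exists_sum_norm_le_sum_card_latticeShell (g : ℝ → ℝ) (hg : ∀ t, 0 ≤ t → 0 ≤ g t)
    {F : Finset (Fin d → ℤ)} (hF : 0 ∉ F) :
    ∃ N, ∑ v ∈ F, g ‖v‖ ≤ ∑ n ∈ range N, #(latticeShell d n) * g (n + 1) := by
  refine ⟨F.sup fun v => ⌈‖v‖⌉₊, ?_⟩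
  have hsub : F ⊆ latticeBox d (F.sup fun v => ⌈‖v‖⌉₊) \ latticeBox d 0 := fun v hv => by
    refine mem_sdiff.2 ⟨mem_latticeBox.2 ?_, ?_⟩
    · exact (Nat.le_ceil _).trans (by exact_mod_cast le_sup (f := fun v => ⌈‖v‖⌉₊) hv)
    · rw [mem_latticeBox, Nat.cast_zero, norm_le_zero_iff]
      exact fun h => hF (h ▸ hv)
  refine (sum_le_sum_of_subset_of_nonneg hsub fun _ _ _ => hg _ (norm_nonneg _)).trans_eq ?_
  rw [sum_latticeBox_sdiff_eq_sum_latticeShell]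
  refine sum_congr rfl fun n _ => ?_
  rw [sum_congr rfl fun v hv => by rw [norm_eq_of_mem_latticeShell hv], sum_const, nsmul_eq_mul]

lemma sum_norm_rpow_mul_exp_le {a c : ℝ} (ha : 0 < a) (hc : 0 < c) {F : Finset (Fin d → ℤ)}
    (hF : 0 ∉ F) :
    ∑ v ∈ F, ‖v‖ ^ (a - d) * exp (-(c * ‖v‖)) ≤
      2 * d * 3 ^ (d - 1) * 2 ^ |a - 1| * Gamma a * (2 / c) ^ a := by
  obtain ⟨N, hN⟩ := exists_sum_norm_le_sum_card_latticeShell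
    (fun t => t ^ (a - d) * exp (-(c * t))) (fun t ht => by positivity) hF
  refine hN.trans ?_
  calc ∑ n ∈ range N, (#(latticeShell d n) : ℝ) * (((n : ℝ) + 1) ^ (a - d) * exp (-(c * (n + 1))))
      ≤ ∑ n ∈ range N, 2 * 3 ^ (d - 1) * (d * ((n : ℝ) + 1) ^ (d - 1) * ((n : ℝ) + 1) ^ (a - d)) *
          exp (-(c * (n + 1))) :=
        sum_le_sum fun n _ =>
          (mul_le_mul_of_nonneg_right (card_latticeShell_le d n) (by positivity)).trans_eq
            (by ring)
    _ = 2 * d * 3 ^ (d - 1) * ∑ n ∈ range N, ((n : ℝ) + 1) ^ (a - 1) * exp (-(c * (n + 1))) := by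
        rw [mul_sum]
        refine sum_congr rfl fun n _ => ?_
        rw [natCast_mul_pow_sub_one_mul_rpow (by positivity)]
        ring
    _ ≤ _ :=
        (mul_le_mul_of_nonneg_left (sum_range_rpow_mul_exp_le ha hc N) (by positivity)).trans_eq
          (by ring)

lemma rpow_norm_add_smul_mul_exp_le {x u : Fin d → ℤ} {r : ℤ} (p : ℝ) {ν : ℝ} (hν : 0 ≤ ν)
    (hr : 0 < r) (hu : u ≠ 0) (hx : ‖x‖ ≤ r / 2) :
    ‖x + r • u‖ ^ p * exp (-ν * ‖x + r • u‖) ≤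
      2 ^ |p| * exp (-ν * r / 4) * r ^ p * (‖u‖ ^ p * exp (-(ν * r / 4 * ‖u‖))) := by
  have hr' : (0 : ℝ) < r := by exact_mod_cast hr
  have hu1 := one_le_norm_of_ne_zero hu
  have hru : ‖r • u‖ = r * ‖u‖ := by rw [norm_smul, Int.norm_eq_abs, abs_of_pos hr']
  calc ‖x + r • u‖ ^ p * exp (-ν * ‖x + r • u‖)
      ≤ 2 ^ |p| * ‖r • u‖ ^ p * exp (-ν * ‖r • u‖ / 2) :=
        rpow_norm_add_mul_exp_le p hν (by rw [hru]; positivity) (by rw [hru]; nlinarith)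
    _ ≤ 2 ^ |p| * (r ^ p * ‖u‖ ^ p) * (exp (-ν * r / 4) * exp (-(ν * r / 4 * ‖u‖))) := by
        rw [hru, mul_rpow hr'.le (by positivity), ← exp_add]
        gcongr
        nlinarith [mul_nonneg hν hr'.le]
    _ = _ := by ring

end Lattice

lemma rpow_sub_mul_two_div_rpow {ν r : ℝ} (hν : 0 < ν) (hr : 0 < r) (a b : ℝ) :
    r ^ (a - b) * (2 / (ν * r / 4)) ^ a = 8 ^ a * ν ^ (-a) * r ^ (-b) := by
  rw [show 2 / (ν * r / 4) = 8 * ν⁻¹ * r⁻¹ by field_simp; ring,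
    mul_rpow (by positivity) (by positivity), mul_rpow (by positivity) (by positivity),
    inv_rpow hν.le, inv_rpow hr.le, ← rpow_neg hν.le, ← rpow_neg hr.le]
  calc r ^ (a - b) * (8 ^ a * ν ^ (-a) * r ^ (-a))
      = 8 ^ a * ν ^ (-a) * (r ^ (a - b) * r ^ (-a)) := by ring
    _ = 8 ^ a * ν ^ (-a) * r ^ (-b) := by rw [← rpow_add hr]; ring_nf

theorem sum_translates_exp_decay_general (d : ℕ) (a : ℝ) (ha : 0 < a) :
    ∃ C : ℝ, 0 < C ∧ ∀ r : ℤ, 2 ≤ r → ∀ ν : ℝ, 0 < ν →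
      ∀ x : Fin d → ℤ, ‖x‖ ≤ (r : ℝ) / 2 →
      Summable (fun u : {u : Fin d → ℤ // u ≠ 0} =>
        ‖x + r • (u : Fin d → ℤ)‖ ^ (a - d) * Real.exp (-ν * ‖x + r • (u : Fin d → ℤ)‖)) ∧
      ∑' u : {u : Fin d → ℤ // u ≠ 0},
          ‖x + r • (u : Fin d → ℤ)‖ ^ (a - d) * Real.exp (-ν * ‖x + r • (u : Fin d → ℤ)‖)
        ≤ C * ν ^ (-a) * (r : ℝ) ^ (-(d : ℝ)) * Real.exp (-ν * r / 4) := by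
  set L := 2 * d * 3 ^ (d - 1) * 2 ^ |a - 1| * Gamma a
  refine ⟨2 ^ |a - d| * 8 ^ a * (L + 1), by positivity, fun r hr ν hν x hx => ?_⟩
  have hr0 : (0 : ℝ) < r := by exact_mod_cast (by omega : (0 : ℤ) < r)
  have hpartial (F : Finset {u : Fin d → ℤ // u ≠ 0}) :
      ∑ u ∈ F, ‖x + r • (u : Fin d → ℤ)‖ ^ (a - d) * exp (-ν * ‖x + r • (u : Fin d → ℤ)‖) ≤
        2 ^ |a - d| * 8 ^ a * (L + 1) * ν ^ (-a) * (r : ℝ) ^ (-(d : ℝ)) * exp (-ν * r / 4) := by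
    have hlattice := sum_norm_rpow_mul_exp_le ha (c := ν * r / 4) (by positivity)
      (F := F.map (Function.Embedding.subtype _)) (by simp)
    rw [Finset.sum_map] at hlattice
    calc _ ≤ ∑ u ∈ F, 2 ^ |a - d| * exp (-ν * r / 4) * (r : ℝ) ^ (a - d) *
          (‖(u : Fin d → ℤ)‖ ^ (a - d) * exp (-(ν * r / 4 * ‖(u : Fin d → ℤ)‖))) :=
          Finset.sum_le_sum fun u _ => rpow_norm_add_smul_mul_exp_le _ hν.le (by omega) u.2 hx
      _ ≤ 2 ^ |a - d| * exp (-ν * r / 4) * ((r : ℝ) ^ (a - d) * (L * (2 / (ν * r / 4)) ^ a)) := by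
          rw [← Finset.mul_sum, mul_assoc]
          gcongr
          exact hlattice
      _ = 2 ^ |a - d| * 8 ^ a * L * ν ^ (-a) * (r : ℝ) ^ (-(d : ℝ)) * exp (-ν * r / 4) := by
          rw [mul_left_comm _ L, rpow_sub_mul_two_div_rpow hν hr0]
          ring
      _ ≤ _ := by gcongr; linarith
  exact ⟨summable_of_sum_le (fun _ => by positivity) hpartial,
    Real.tsum_le_of_sum_le (fun _ => by positivity) hpartial⟩

theorem sum_translates_exp_decay (d : ℕ) (hd : 1 ≤ d) (a : ℝ) (ha : 0 < a) :
    ∃ C : ℝ, 0 < C ∧ ∀ r : ℤ, 2 ≤ r → ∀ ν : ℝ, 0 < ν →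
      ∀ x : Fin d → ℤ, ‖x‖ ≤ (r : ℝ) / 2 →
      Summable (fun u : {u : Fin d → ℤ // u ≠ 0} =>
        ‖x + r • (u : Fin d → ℤ)‖ ^ (a - d) * Real.exp (-ν * ‖x + r • (u : Fin d → ℤ)‖)) ∧
      ∑' u : {u : Fin d → ℤ // u ≠ 0},
          ‖x + r • (u : Fin d → ℤ)‖ ^ (a - d) * Real.exp (-ν * ‖x + r • (u : Fin d → ℤ)‖)
        ≤ C * ν ^ (-a) * (r : ℝ) ^ (-(d : ℝ)) * Real.exp (-ν * r / 4) :=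
  sum_translates_exp_decay_general d a ha
end

section
/- Let d ≥ 1 and let a, b > 0 satisfy a + b < d. There exists a constant C = C(d,a,b) > 0 such that for every x ∈ ℤ^d, ∑_{y ∈ ℤ^d} ⟨y⟩^{a−d} · ⟨x − y⟩^{b−d} ≤ C · ⟨x⟩^{a+b−d}. -/
/-- The Japanese bracket `⟨x⟩ = max(‖x‖_∞, 1)` on `ℤ^d`. -/
noncomputable def jap {d : ℕ} (x : Fin d → ℤ) : ℝ := max ‖x‖ 1

/-!
Split `ℤ^d` according to which of `⟨y⟩`, `⟨x - y⟩` is smaller. Where `⟨y⟩ ≤ ⟨x - y⟩`, the triangle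
inequality `⟨x⟩ ≤ ⟨y⟩ + ⟨x - y⟩` gives `2 ⟨x - y⟩ ≥ max ⟨x⟩ ⟨y⟩`, so the summand is at most
`2^(d-b) ⟨y⟩^(a-d) max(⟨x⟩, ⟨y⟩)^(b-d)`, a decreasing radial function of `y`; the other region is
the same with `a` and `b` exchanged, after `y ↦ x - y`. The shell `⟨y⟩ = k + 1` has `O(k^(d-1))` points,
so with `R = ⟨x⟩` a radial sum is dominated by `∑ₖ (k+1)^(a-1) max(R, k+1)^(b-d)`. Below `R` this
is at most `R^(b-d) ∑ₖ (k+1)^(a-1) = O(R^(a+b-d))`, above `R` at most the tail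
`∑ₖ (k+1)^(a+b-d-1) = O(R^(a+b-d))`; both one-dimensional bounds come from telescoping with
Bernoulli's inequality.
-/

open Finset

lemma one_sub_rpow_le_one_sub_min_mul {s h : ℝ} (hs : 0 < s) (h0 : 0 ≤ h) (h1 : h ≤ 1) :
    (1 - h) ^ s ≤ 1 - min s 1 * h := by
  rcases le_total s 1 with hs1 | hs1
  · rw [min_eq_left hs1]
    simpa [sub_eq_add_neg, mul_comm] using
      rpow_one_add_le_one_add_mul_self (s := -h) (by linarith) hs.le hs1
  · rw [min_eq_right hs1, one_mul]
    calc (1 - h) ^ s ≤ (1 - h) ^ (1 : ℝ) :=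
          Real.rpow_le_rpow_of_exponent_ge' (by linarith) (by linarith) zero_le_one hs1
      _ = 1 - h := Real.rpow_one _

lemma min_mul_rpow_sub_one_le_rpow_sub_rpow {s x : ℝ} (hs : 0 < s) (hx : 0 ≤ x) :
    min s 1 * (x + 1) ^ (s - 1) ≤ (x + 1) ^ s - x ^ s := by
  have hx1 : 0 < x + 1 := by linarith
  have hinv : (x + 1)⁻¹ ≤ 1 := inv_le_one_of_one_le₀ (by linarith)
  have hx_eq : x = (x + 1) * (1 - (x + 1)⁻¹) := by field_simp; ring
  calc min s 1 * (x + 1) ^ (s - 1) = (x + 1) ^ s * (1 - (1 - min s 1 * (x + 1)⁻¹)) := by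
        rw [Real.rpow_sub_one hx1.ne']; ring
    _ ≤ (x + 1) ^ s * (1 - (1 - (x + 1)⁻¹) ^ s) := by
        gcongr
        exact one_sub_rpow_le_one_sub_min_mul hs (by positivity) hinv
    _ = (x + 1) ^ s - x ^ s := by
        rw [mul_sub, mul_one, ← Real.mul_rpow hx1.le (by linarith), ← hx_eq]

lemma min_mul_rpow_sub_one_le_rpow_sub_rpow_of_neg {s x : ℝ} (hs : s < 0) (hx : 0 < x) :
    min (-s) 1 * (x + 1) ^ (s - 1) ≤ x ^ s - (x + 1) ^ s := by
  have hx1 : 0 < x + 1 := by linarith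
  have key := min_mul_rpow_sub_one_le_rpow_sub_rpow (neg_pos.2 hs) hx.le
  have hxs := Real.rpow_pos_of_pos hx s
  have hx1s := Real.rpow_pos_of_pos hx1 s
  have hmono : (x + 1) ^ s ≤ x ^ s := Real.rpow_le_rpow_of_nonpos hx (by linarith) hs.le
  have hc : 0 ≤ min (-s) 1 := le_min (by linarith) zero_le_one
  rw [Real.rpow_neg hx1.le, Real.rpow_neg hx.le, Real.rpow_sub_one hx1.ne',
    Real.rpow_neg hx1.le] at key
  rw [Real.rpow_sub_one hx1.ne']
  calc min (-s) 1 * ((x + 1) ^ s / (x + 1))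
      ≤ min (-s) 1 * (x ^ s / (x + 1)) := by gcongr
    _ = x ^ s * (x + 1) ^ s * (min (-s) 1 * (((x + 1) ^ s)⁻¹ / (x + 1))) := by
        field_simp
    _ ≤ x ^ s * (x + 1) ^ s * (((x + 1) ^ s)⁻¹ - (x ^ s)⁻¹) := by gcongr
    _ = x ^ s - (x + 1) ^ s := by field_simp

lemma sum_range_add_one_rpow_le {p : ℝ} (hp : -1 < p) (n : ℕ) :
    ∑ k ∈ range n, ((k : ℝ) + 1) ^ p ≤ (min (p + 1) 1)⁻¹ * (n : ℝ) ^ (p + 1) := by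
  have hc : 0 < min (p + 1) 1 := lt_min (by linarith) one_pos
  calc ∑ k ∈ range n, ((k : ℝ) + 1) ^ p
      ≤ ∑ k ∈ range n, (min (p + 1) 1)⁻¹ * (((k + 1 : ℕ) : ℝ) ^ (p + 1) - (k : ℝ) ^ (p + 1)) := by
        gcongr with k
        rw [le_inv_mul_iff₀ hc, Nat.cast_succ]
        simpa using min_mul_rpow_sub_one_le_rpow_sub_rpow (by linarith : 0 < p + 1) k.cast_nonneg
    _ = (min (p + 1) 1)⁻¹ * (n : ℝ) ^ (p + 1) := by
        rw [← mul_sum, sum_range_sub (fun k : ℕ => (k : ℝ) ^ (p + 1))]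
        simp [Real.zero_rpow (by linarith : p + 1 ≠ 0)]

lemma sum_Ico_add_one_rpow_le {q : ℝ} (hq : q < -1) {N : ℕ} (hN : 1 ≤ N) (n : ℕ) :
    ∑ k ∈ Ico N n, ((k : ℝ) + 1) ^ q ≤ (min (-(q + 1)) 1)⁻¹ * (N : ℝ) ^ (q + 1) := by
  have hc : 0 < min (-(q + 1)) 1 := lt_min (by linarith) one_pos
  have hN' : (0 : ℝ) < N := by exact_mod_cast hN
  rw [sum_Ico_eq_sum_range]
  calc ∑ k ∈ range (n - N), (((N + k : ℕ) : ℝ) + 1) ^ q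
      ≤ ∑ k ∈ range (n - N), (min (-(q + 1)) 1)⁻¹ *
          (((N + k : ℕ) : ℝ) ^ (q + 1) - ((N + (k + 1) : ℕ) : ℝ) ^ (q + 1)) := by
        gcongr with k
        rw [le_inv_mul_iff₀ hc, ← add_assoc, Nat.cast_succ]
        simpa using min_mul_rpow_sub_one_le_rpow_sub_rpow_of_neg (by linarith : q + 1 < 0)
          (by positivity : (0 : ℝ) < (N + k : ℕ))
    _ ≤ (min (-(q + 1)) 1)⁻¹ * (N : ℝ) ^ (q + 1) := by
        rw [← mul_sum, sum_range_sub' (fun k : ℕ => ((N + k : ℕ) : ℝ) ^ (q + 1))]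
        gcongr
        simp only [add_zero, sub_le_self_iff]
        positivity

lemma sum_range_add_one_rpow_mul_max_rpow_le {p q R : ℝ} (hp : -1 < p) (hpq : p + q < -1)
    (hR : 1 ≤ R) (n : ℕ) :
    ∑ k ∈ range n, ((k : ℝ) + 1) ^ p * max R ((k : ℝ) + 1) ^ q ≤
      (2 ^ (p + 1) * (min (p + 1) 1)⁻¹ + (min (-(p + q + 1)) 1)⁻¹) * R ^ (p + q + 1) := by
  have hq : q ≤ 0 := by linarith
  have hc : 0 < min (p + 1) 1 := lt_min (by linarith) one_pos
  set N := ⌈R⌉₊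
  have hRN : R ≤ N := Nat.le_ceil R
  have hNR : (N : ℝ) ≤ 2 * R := Nat.ceil_le_two_mul (by linarith)
  have hN : 1 ≤ N := Nat.one_le_ceil_iff.2 (by linarith)
  have hlow : ∑ k ∈ range N, ((k : ℝ) + 1) ^ p * max R ((k : ℝ) + 1) ^ q ≤
      2 ^ (p + 1) * (min (p + 1) 1)⁻¹ * R ^ (p + q + 1) := by
    calc ∑ k ∈ range N, ((k : ℝ) + 1) ^ p * max R ((k : ℝ) + 1) ^ q
        ≤ ∑ k ∈ range N, ((k : ℝ) + 1) ^ p * R ^ q :=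
          sum_le_sum fun k _ => mul_le_mul_of_nonneg_left
            (Real.rpow_le_rpow_of_nonpos (by linarith) (le_max_left _ _) hq) (by positivity)
      _ ≤ (min (p + 1) 1)⁻¹ * (2 * R) ^ (p + 1) * R ^ q := by
          rw [← sum_mul]
          gcongr
          exact (sum_range_add_one_rpow_le hp N).trans
            (mul_le_mul_of_nonneg_left (Real.rpow_le_rpow (by positivity) hNR (by linarith))
              (inv_nonneg.2 hc.le))
      _ = 2 ^ (p + 1) * (min (p + 1) 1)⁻¹ * R ^ (p + q + 1) := by
          rw [Real.mul_rpow zero_le_two (by linarith), add_right_comm,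
            Real.rpow_add (by linarith) _ q]
          ring
  have hhigh : ∀ m, ∑ k ∈ Ico N m, ((k : ℝ) + 1) ^ p * max R ((k : ℝ) + 1) ^ q ≤
      (min (-(p + q + 1)) 1)⁻¹ * R ^ (p + q + 1) := by
    intro m
    calc ∑ k ∈ Ico N m, ((k : ℝ) + 1) ^ p * max R ((k : ℝ) + 1) ^ q
        ≤ ∑ k ∈ Ico N m, ((k : ℝ) + 1) ^ (p + q) := by
          gcongr with k
          rw [Real.rpow_add (by positivity)]
          exact mul_le_mul_of_nonneg_left
            (Real.rpow_le_rpow_of_nonpos (by positivity) (le_max_right _ _) hq) (by positivity)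
      _ ≤ (min (-(p + q + 1)) 1)⁻¹ * (N : ℝ) ^ (p + q + 1) := sum_Ico_add_one_rpow_le hpq hN m
      _ ≤ (min (-(p + q + 1)) 1)⁻¹ * R ^ (p + q + 1) :=
          mul_le_mul_of_nonneg_left (Real.rpow_le_rpow_of_nonpos (by linarith) hRN
            (by linarith)) (inv_nonneg.2 (lt_min (by linarith) one_pos).le)
  calc ∑ k ∈ range n, ((k : ℝ) + 1) ^ p * max R ((k : ℝ) + 1) ^ q
      ≤ ∑ k ∈ range (max n N), ((k : ℝ) + 1) ^ p * max R ((k : ℝ) + 1) ^ q :=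
        sum_le_sum_of_subset_of_nonneg (range_subset_range.2 (le_max_left _ _))
          (fun _ _ _ => by positivity)
    _ = ∑ k ∈ range N, ((k : ℝ) + 1) ^ p * max R ((k : ℝ) + 1) ^ q +
          ∑ k ∈ Ico N (max n N), ((k : ℝ) + 1) ^ p * max R ((k : ℝ) + 1) ^ q :=
        (sum_range_add_sum_Ico _ (le_max_right _ _)).symm
    _ ≤ _ := by linarith [hhigh (max n N)]

lemma rpow_le_two_rpow_mul_max_rpow {c R s t : ℝ} (hc : c ≤ 0) (hs : 0 < s) (hst : s ≤ t)
    (hR : R ≤ s + t) : t ^ c ≤ 2 ^ (-c) * max R s ^ c := by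
  have h2t : max R s ≤ 2 * t := max_le (by linarith) (by linarith)
  calc t ^ c = 2 ^ (-c) * (2 * t) ^ c := by
        rw [Real.mul_rpow zero_le_two (by linarith), ← mul_assoc, ← Real.rpow_add two_pos]
        simp
    _ ≤ 2 ^ (-c) * max R s ^ c := mul_le_mul_of_nonneg_left
        (Real.rpow_le_rpow_of_nonpos (hs.trans_le (le_max_right R s)) h2t hc) (by positivity)

noncomputable def intCube (d n : ℕ) : Finset (Fin d → ℤ) :=
  Fintype.piFinset fun _ => Icc (-(n : ℤ)) n

section Lattice

variable {d : ℕ}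

lemma one_le_jap (y : Fin d → ℤ) : 1 ≤ jap y := le_max_right _ _

lemma jap_pos (y : Fin d → ℤ) : 0 < jap y := one_pos.trans_le (one_le_jap y)

lemma jap_zero : jap (0 : Fin d → ℤ) = 1 := by simp [jap]

lemma jap_le_jap_add_jap_sub (x y : Fin d → ℤ) : jap x ≤ jap y + jap (x - y) := by
  have h : ‖x‖ ≤ ‖y‖ + ‖x - y‖ := by simpa using norm_add_le y (x - y)
  unfold jap
  apply max_le <;>
  linarith [le_max_left ‖y‖ 1, le_max_left ‖x - y‖ 1, le_max_right ‖y‖ 1, le_max_right ‖x - y‖ 1]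

lemma mem_intCube {n : ℕ} {y : Fin d → ℤ} : y ∈ intCube d n ↔ ∀ i, |y i| ≤ n := by
  simp [intCube, abs_le]

lemma intCube_mono (d : ℕ) : Monotone (intCube d) := fun m n hmn y hy =>
  mem_intCube.2 fun i => (mem_intCube.1 hy i).trans (by exact_mod_cast hmn)

lemma intCube_zero (d : ℕ) : intCube d 0 = {0} := by
  ext y
  simp [mem_intCube, funext_iff]

lemma exists_subset_intCube (s : Finset (Fin d → ℤ)) : ∃ n, s ⊆ intCube d n :=
  ⟨s.sup fun y => univ.sup fun i => (y i).natAbs, fun y hy => mem_intCube.2 fun i => by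
    have : (y i).natAbs ≤ s.sup fun y => univ.sup fun i => (y i).natAbs :=
      (le_sup (f := fun i => (y i).natAbs) (mem_univ i)).trans
        (le_sup (f := fun y => univ.sup fun i => (y i).natAbs) hy)
    rw [Int.abs_eq_natAbs]
    exact_mod_cast this⟩

lemma card_intCube (d n : ℕ) : #(intCube d n) = (2 * n + 1) ^ d := by
  simp only [intCube, Fintype.card_piFinset, Int.card_Icc, prod_const, card_univ, Fintype.card_fin]
  congr 1
  omega

lemma card_intCube_succ_sdiff_le (d k : ℕ) :
    #(intCube d (k + 1) \ intCube d k) ≤ 2 * d * 3 ^ (d - 1) * (k + 1) ^ (d - 1) := by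
  have hshell : (2 * k + 3) ^ d - (2 * k + 1) ^ d ≤ 2 * d * (2 * k + 3) ^ (d - 1) := by
    have h := abs_pow_sub_pow_le (2 * k + 3 : ℤ) (2 * k + 1) d
    have hle : (2 * k + 1) ^ d ≤ (2 * k + 3) ^ d := by gcongr; omega
    have e₃ : |(2 * k + 3 : ℤ)| = 2 * k + 3 := abs_of_nonneg (by positivity)
    have e₁ : |(2 * k + 1 : ℤ)| = 2 * k + 1 := abs_of_nonneg (by positivity)
    rw [e₃, e₁, max_eq_left (by linarith), show (2 * k + 3 : ℤ) - (2 * k + 1) = 2 by ring,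
      abs_two] at h
    zify [hle]
    linarith [le_abs_self ((2 * k + 3 : ℤ) ^ d - (2 * k + 1) ^ d)]
  calc #(intCube d (k + 1) \ intCube d k)
      = (2 * k + 3) ^ d - (2 * k + 1) ^ d := by
        rw [card_sdiff_of_subset (intCube_mono d k.le_succ), card_intCube, card_intCube]
        rfl
    _ ≤ 2 * d * (2 * k + 3) ^ (d - 1) := hshell
    _ ≤ 2 * d * (3 * (k + 1)) ^ (d - 1) := by gcongr; omega
    _ = 2 * d * 3 ^ (d - 1) * (k + 1) ^ (d - 1) := by rw [mul_pow]; ring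

lemma add_one_le_jap_of_notMem_intCube {k : ℕ} {y : Fin d → ℤ} (hy : y ∉ intCube d k) :
    (k : ℝ) + 1 ≤ jap y := by
  obtain ⟨i, hi⟩ : ∃ i, (k : ℤ) < |y i| := by simpa [mem_intCube] using hy
  calc (k : ℝ) + 1 ≤ |(y i : ℝ)| := by exact_mod_cast hi
    _ = ‖y i‖ := (Int.norm_eq_abs _).symm
    _ ≤ ‖y‖ := norm_le_pi_norm y i
    _ ≤ jap y := le_max_left _ _

lemma exists_sum_comp_jap_le_of_antitoneOn {φ : ℝ → ℝ} (hφ : AntitoneOn φ (Set.Ici 1))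
    (hφ₀ : ∀ t, 1 ≤ t → 0 ≤ φ t) (s : Finset (Fin d → ℤ)) :
    ∃ n, ∑ y ∈ s, φ (jap y) ≤
      φ 1 + 2 * d * 3 ^ (d - 1) * ∑ k ∈ range n, ((k : ℝ) + 1) ^ (d - 1) * φ (k + 1) := by
  obtain ⟨n, hs⟩ := exists_subset_intCube s
  refine ⟨n, ?_⟩
  have hshell (k : ℕ) : ∑ y ∈ intCube d (k + 1) \ intCube d k, φ (jap y) ≤
      2 * d * 3 ^ (d - 1) * (((k : ℝ) + 1) ^ (d - 1) * φ (k + 1)) := by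
    calc ∑ y ∈ intCube d (k + 1) \ intCube d k, φ (jap y)
        ≤ ∑ y ∈ intCube d (k + 1) \ intCube d k, φ (k + 1) := by
          refine sum_le_sum fun y hy => hφ (by simp) (one_le_jap y) ?_
          exact add_one_le_jap_of_notMem_intCube (mem_sdiff.1 hy).2
      _ ≤ (2 * d * 3 ^ (d - 1) * (k + 1) ^ (d - 1) : ℕ) * φ (k + 1) := by
          rw [sum_const, nsmul_eq_mul]
          gcongr
          · exact hφ₀ _ (by simp)
          · exact_mod_cast card_intCube_succ_sdiff_le d k
      _ = 2 * d * 3 ^ (d - 1) * (((k : ℝ) + 1) ^ (d - 1) * φ (k + 1)) := by push_cast; ring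
  calc ∑ y ∈ s, φ (jap y) ≤ ∑ y ∈ intCube d n, φ (jap y) :=
        sum_le_sum_of_subset_of_nonneg hs fun y _ _ => hφ₀ _ (one_le_jap y)
    _ = φ 1 + ∑ k ∈ range n, ∑ y ∈ intCube d (k + 1) \ intCube d k, φ (jap y) := by
        rw [sum_eq_sum_range_sdiff _ (intCube_mono d), intCube_zero, sum_singleton, jap_zero]
    _ ≤ _ := by
        rw [mul_sum]
        gcongr with k
        exact hshell k

lemma exists_sum_jap_rpow_mul_max_rpow_le (hd : 1 ≤ d) {a b : ℝ} (ha : 0 < a)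
    (hb : 0 < b) (hab : a + b < d) :
    ∃ C, 0 < C ∧ ∀ R, 1 ≤ R → ∀ s : Finset (Fin d → ℤ),
      ∑ y ∈ s, jap y ^ (a - d) * max R (jap y) ^ (b - d) ≤ C * R ^ (a + b - d) := by
  set C₁ := 2 ^ a * (min a 1)⁻¹ + (min (-(a + b - d)) 1)⁻¹
  have hC₁ : 0 < C₁ := by
    have : 0 < min (-(a + b - d)) 1 := lt_min (by linarith) one_pos
    have : 0 < min a 1 := lt_min ha one_pos
    positivity
  refine ⟨1 + 2 * d * 3 ^ (d - 1) * C₁, by positivity, fun R hR s => ?_⟩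
  set φ : ℝ → ℝ := fun t => t ^ (a - d) * max R t ^ (b - d)
  have hφ : AntitoneOn φ (Set.Ici 1) := fun t (ht : 1 ≤ t) u _ htu =>
    mul_le_mul (Real.rpow_le_rpow_of_nonpos (by linarith) htu (by linarith))
      (Real.rpow_le_rpow_of_nonpos (by positivity) (max_le_max_left R htu) (by linarith))
      (by positivity) (by positivity)
  have hφ₀ (t : ℝ) (ht : 1 ≤ t) : 0 ≤ φ t := by positivity
  have hφ₁ : φ 1 ≤ R ^ (a + b - d) := by
    simp only [φ, Real.one_rpow, one_mul, max_eq_left hR]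
    exact Real.rpow_le_rpow_of_exponent_le hR (by linarith)
  have hradial (k : ℕ) : ((k : ℝ) + 1) ^ (d - 1) * φ (k + 1) =
      ((k : ℝ) + 1) ^ (a - 1) * max R ((k : ℝ) + 1) ^ (b - d) := by
    rw [← mul_assoc, ← Real.rpow_natCast, ← Real.rpow_add (by positivity), Nat.cast_sub hd]
    ring_nf
  obtain ⟨n, hn⟩ := exists_sum_comp_jap_le_of_antitoneOn hφ hφ₀ s
  have h1D := sum_range_add_one_rpow_mul_max_rpow_le (p := a - 1) (q := b - d) (by linarith)
    (by linarith) hR n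
  rw [show a - 1 + 1 = a by ring, show a - 1 + (b - d) + 1 = a + b - d by ring] at h1D
  simp only [hradial] at hn
  calc ∑ y ∈ s, jap y ^ (a - d) * max R (jap y) ^ (b - d)
      ≤ φ 1 + 2 * d * 3 ^ (d - 1) * (C₁ * R ^ (a + b - d)) := hn.trans (by gcongr)
    _ ≤ (1 + 2 * d * 3 ^ (d - 1) * C₁) * R ^ (a + b - d) := by linarith

lemma jap_rpow_mul_jap_sub_rpow_le {a b : ℝ} (ha : a ≤ d) (hb : b ≤ d)
    (x y : Fin d → ℤ) :
    jap y ^ (a - d) * jap (x - y) ^ (b - d) ≤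
      2 ^ (d - b) * (jap y ^ (a - d) * max (jap x) (jap y) ^ (b - d)) +
        2 ^ (d - a) * (jap (x - y) ^ (b - d) * max (jap x) (jap (x - y)) ^ (a - d)) := by
  have hy := jap_pos y
  have hxy := jap_pos (x - y)
  rcases le_total (jap y) (jap (x - y)) with h | h
  · have key := rpow_le_two_rpow_mul_max_rpow (c := b - d) (by linarith) hy h
      (jap_le_jap_add_jap_sub x y)
    rw [neg_sub] at key
    calc jap y ^ (a - d) * jap (x - y) ^ (b - d)
        ≤ jap y ^ (a - d) * (2 ^ (d - b) * max (jap x) (jap y) ^ (b - d)) := by gcongr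
      _ ≤ _ := by
        rw [mul_left_comm]
        exact le_add_of_nonneg_right (by positivity)
  · have key := rpow_le_two_rpow_mul_max_rpow (c := a - d) (by linarith) hxy h
      (by simpa using jap_le_jap_add_jap_sub x (x - y))
    rw [neg_sub] at key
    calc jap y ^ (a - d) * jap (x - y) ^ (b - d)
        ≤ (2 ^ (d - a) * max (jap x) (jap (x - y)) ^ (a - d)) * jap (x - y) ^ (b - d) := by
          gcongr
      _ ≤ _ := by
        rw [mul_comm, mul_left_comm]
        exact le_add_of_nonneg_left (by positivity)

end Lattice

theorem convolution_estimate (d : ℕ) (hd : 1 ≤ d) (a b : ℝ) (ha : 0 < a) (hb : 0 < b)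
    (hab : a + b < d) :
    ∃ C : ℝ, 0 < C ∧ ∀ x : Fin d → ℤ,
      Summable (fun y : Fin d → ℤ => jap y ^ (a - d) * jap (x - y) ^ (b - d)) ∧
      ∑' y : Fin d → ℤ, jap y ^ (a - d) * jap (x - y) ^ (b - d)
        ≤ C * jap x ^ (a + b - d) := by
  obtain ⟨C₁, hC₁, h₁⟩ := exists_sum_jap_rpow_mul_max_rpow_le hd ha hb hab
  obtain ⟨C₂, hC₂, h₂⟩ := exists_sum_jap_rpow_mul_max_rpow_le hd hb ha (by linarith : b + a < d)
  refine ⟨2 ^ ((d : ℝ) - b) * C₁ + 2 ^ ((d : ℝ) - a) * C₂, by positivity, fun x => ?_⟩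
  have hnonneg : 0 ≤ fun y : Fin d → ℤ => jap y ^ (a - d) * jap (x - y) ^ (b - d) :=
    fun y => mul_nonneg (Real.rpow_nonneg (jap_pos y).le _) (Real.rpow_nonneg (jap_pos _).le _)
  have hfinite (s : Finset (Fin d → ℤ)) : ∑ y ∈ s, jap y ^ (a - d) * jap (x - y) ^ (b - d) ≤
      (2 ^ ((d : ℝ) - b) * C₁ + 2 ^ ((d : ℝ) - a) * C₂) * jap x ^ (a + b - d) := by
    calc ∑ y ∈ s, jap y ^ (a - d) * jap (x - y) ^ (b - d)
        ≤ 2 ^ ((d : ℝ) - b) * ∑ y ∈ s, jap y ^ (a - d) * max (jap x) (jap y) ^ (b - d) +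
            2 ^ ((d : ℝ) - a) * ∑ z ∈ s.image (x - ·),
              jap z ^ (b - d) * max (jap x) (jap z) ^ (a - d) := by
          rw [sum_image fun y _ z _ h => sub_right_injective h, mul_sum, mul_sum,
            ← sum_add_distrib]
          exact sum_le_sum fun y _ =>
            jap_rpow_mul_jap_sub_rpow_le (by linarith) (by linarith) x y
      _ ≤ 2 ^ ((d : ℝ) - b) * (C₁ * jap x ^ (a + b - d)) +
            2 ^ ((d : ℝ) - a) * (C₂ * jap x ^ (b + a - d)) := by
          gcongr
          · exact h₁ _ (one_le_jap x) s
          · exact h₂ _ (one_le_jap x) _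
      _ = _ := by rw [add_comm b a]; ring
  have hsum := summable_of_sum_le hnonneg hfinite
  exact ⟨hsum, hsum.tsum_le_of_sum_le hfinite⟩
end

section
/- Let c > 0, ℓ ≥ 1 an integer, and let f : ℕ → [0, ∞) be nondecreasing with f(2n + ℓ) ≥ c·f(n)² for all n ≥ 0. If there exists n ≥ ℓ with f(n) ≥ 2/c, then f(3^k · n) ≥ (1/c)·2^{2^k} for every integer k ≥ 1. Consequently, if in addition f(n) ≤ C·log(n+2) for all n ≥ 0 and some constant C, then f(n) < 2/c for every n ≥ 0. -/
/-! Squaring at every step, `g (k+1) ≥ c·g k²`, turns `c·g 0 ≥ 2` into `c·g k ≥ 2 ^ 2 ^ k`.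
Along `n, 3n, 9n, …` the recursion applies, since `3m ≥ 2m + ℓ` once `m ≥ ℓ`, so `f (3 ^ k n)`
grows doubly exponentially in `k`, while `C·log (3 ^ k n + 2)` grows only linearly in `k`. -/

lemma one_div_mul_two_pow_two_pow_le_of_mul_sq_le_succ {c : ℝ} (hc : 0 < c) {g : ℕ → ℝ}
    (h0 : 2 / c ≤ g 0) (hsucc : ∀ k, c * g k ^ 2 ≤ g (k + 1)) (k : ℕ) : 1 / c * 2 ^ 2 ^ k ≤ g k := by
  induction k with
  | zero => simpa [div_eq_inv_mul, mul_comm] using h0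
  | succ k ih =>
    calc 1 / c * 2 ^ 2 ^ (k + 1) = c * (1 / c * 2 ^ 2 ^ k) ^ 2 := by
          field_simp; ring
      _ ≤ c * g k ^ 2 := by gcongr
      _ ≤ g (k + 1) := hsucc k

lemma Nat.two_mul_le_two_pow : ∀ k : ℕ, 2 * k ≤ 2 ^ k
  | 0 => Nat.zero_le _
  | j + 1 => by rw [pow_succ]; have := j.lt_two_pow_self; omega

lemma exists_mul_succ_lt_two_pow_two_pow (A : ℝ) : ∃ k : ℕ, A * (k + 1) < 2 ^ 2 ^ k := by
  obtain ⟨k, hk⟩ := pow_unbounded_of_one_lt A one_lt_two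
  refine ⟨k, ?_⟩
  have hsucc : (k + 1 : ℝ) ≤ 2 ^ k := by exact_mod_cast k.lt_two_pow_self
  calc A * (k + 1) < 2 ^ k * (k + 1) := by gcongr
    _ ≤ 2 ^ k * 2 ^ k := by gcongr
    _ = 2 ^ (2 * k) := by rw [two_mul, pow_add]
    _ ≤ 2 ^ 2 ^ k := pow_le_pow_right₀ one_le_two k.two_mul_le_two_pow

lemma log_three_pow_mul_add_two_le (k m : ℕ) :
    Real.log (((3 ^ k * m : ℕ) : ℝ) + 2) ≤ (k + 1) * Real.log (3 * (m + 2)) := by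
  have hm : (1 : ℝ) ≤ m + 2 := by linarith [m.cast_nonneg (α := ℝ)]
  have hle : ((3 ^ k * m : ℕ) : ℝ) + 2 ≤ (3 * (m + 2)) ^ (k + 1) := by
    push_cast
    calc (3 : ℝ) ^ k * m + 2 ≤ 3 ^ (k + 1) * (m + 2) := by
          rw [pow_succ]; nlinarith [one_le_pow₀ (M₀ := ℝ) (n := k) (by norm_num : (1 : ℝ) ≤ 3)]
      _ ≤ 3 ^ (k + 1) * (m + 2) ^ (k + 1) := by gcongr; exact le_self_pow₀ hm k.succ_ne_zero
      _ = (3 * (m + 2)) ^ (k + 1) := (mul_pow _ _ _).symm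
  calc Real.log (((3 ^ k * m : ℕ) : ℝ) + 2) ≤ Real.log ((3 * (m + 2)) ^ (k + 1)) :=
        Real.log_le_log (by positivity) hle
    _ = (k + 1) * Real.log (3 * (m + 2)) := by rw [Real.log_pow]; push_cast; ring

lemma one_div_mul_two_pow_two_pow_le_three_pow_mul {c : ℝ} {ℓ : ℕ} {f : ℕ → ℝ} (hc : 0 < c)
    (hmono : Monotone f) (hrec : ∀ n : ℕ, c * f n ^ 2 ≤ f (2 * n + ℓ)) {n : ℕ}
    (hn : ℓ ≤ n) (hfn : 2 / c ≤ f n) (k : ℕ) : 1 / c * 2 ^ 2 ^ k ≤ f (3 ^ k * n) := by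
  refine one_div_mul_two_pow_two_pow_le_of_mul_sq_le_succ hc (g := fun k ↦ f (3 ^ k * n))
    (by simpa) (fun k ↦ ?_) k
  have hstep : 2 * (3 ^ k * n) + ℓ ≤ 3 ^ (k + 1) * n := by
    have : n ≤ 3 ^ k * n := Nat.le_mul_of_pos_left n (by positivity)
    rw [pow_succ]; nlinarith
  exact (hrec _).trans (hmono hstep)

theorem supermultiplicative_contradiction_general (c : ℝ) (hc : 0 < c) (ℓ : ℕ)
    (f : ℕ → ℝ) (hmono : Monotone f)
    (hrec : ∀ n : ℕ, c * f n ^ 2 ≤ f (2 * n + ℓ)) :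
    (∀ n : ℕ, ℓ ≤ n → 2 / c ≤ f n →
      ∀ k : ℕ, 1 ≤ k → (1 / c) * 2 ^ (2 ^ k) ≤ f (3 ^ k * n)) ∧
    (∀ C : ℝ, (∀ n : ℕ, f n ≤ C * Real.log ((n : ℝ) + 2)) → ∀ n : ℕ, f n < 2 / c) := by
  have growth {n : ℕ} (hn : ℓ ≤ n) (hfn : 2 / c ≤ f n) (k : ℕ) :
      1 / c * 2 ^ 2 ^ k ≤ f (3 ^ k * n) :=
    one_div_mul_two_pow_two_pow_le_three_pow_mul hc hmono hrec hn hfn k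
  refine ⟨fun n hn hfn k _ ↦ growth hn hfn k, fun C hC n ↦ ?_⟩
  by_contra! hfn
  set m := max n ℓ
  set L := Real.log (3 * (m + 2))
  have hL : 0 ≤ L := Real.log_nonneg (by linarith [m.cast_nonneg (α := ℝ)])
  obtain ⟨k, hk⟩ := exists_mul_succ_lt_two_pow_two_pow (c * (|C| * L))
  have hbound : 1 / c * 2 ^ 2 ^ k ≤ |C| * L * (k + 1) :=
    calc 1 / c * 2 ^ 2 ^ k ≤ f (3 ^ k * m) :=
          growth (le_max_right n ℓ) (hfn.trans (hmono (le_max_left n ℓ))) k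
      _ ≤ C * Real.log (((3 ^ k * m : ℕ) : ℝ) + 2) := hC _
      _ ≤ |C| * ((k + 1) * L) := by
          gcongr ?_ * ?_
          · exact Real.log_nonneg (by push_cast; linarith [show (0 : ℝ) ≤ 3 ^ k * m by positivity])
          · exact le_abs_self C
          · exact log_three_pow_mul_add_two_le k m
      _ = |C| * L * (k + 1) := by ring
  rw [div_mul_eq_mul_div, one_mul, div_le_iff₀ hc] at hbound
  linarith

theorem supermultiplicative_contradiction (c : ℝ) (hc : 0 < c) (ℓ : ℕ) (hℓ : 1 ≤ ℓ)
    (f : ℕ → ℝ) (hpos : ∀ n, 0 ≤ f n) (hmono : Monotone f)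
    (hrec : ∀ n : ℕ, c * f n ^ 2 ≤ f (2 * n + ℓ)) :
    (∀ n : ℕ, ℓ ≤ n → 2 / c ≤ f n →
      ∀ k : ℕ, 1 ≤ k → (1 / c) * 2 ^ (2 ^ k) ≤ f (3 ^ k * n)) ∧
    (∀ C : ℝ, (∀ n : ℕ, f n ≤ C * Real.log ((n : ℝ) + 2)) → ∀ n : ℕ, f n < 2 / c) :=
  supermultiplicative_contradiction_general c hc ℓ f hmono hrec
end

section
/- Let a, b ∈ ℝ with a < b and let f : [a, b] → ℝ be monotone nondecreasing. Then f(b) − f(a) ≥ ∫_a^b D₊f(x) dx, where D₊f(x) := liminf_{ε↓0} (f(x+ε) − f(x))/ε is the lower-right Dini derivative, which is a measurable nonnegative function. -/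
/-!
By Lebesgue's theorem a monotone function is differentiable almost everywhere, and wherever `f`
has a right derivative the lower-right Dini derivative equals it. So `∫ D₊f = ∫ f'` over
`[a, b]`, and `∫ f' ≤ f b - f a` for monotone `f` (Fatou's lemma applied to difference quotients).
-/

open Filter

/-- The lower-right Dini derivative `D₊f(x) = liminf_{ε ↓ 0} (f(x+ε) - f(x))/ε`. -/
noncomputable def lowerRightDini (f : ℝ → ℝ) (x : ℝ) : ℝ :=
  Filter.liminf (fun ε : ℝ => (f (x + ε) - f x) / ε) (nhdsWithin 0 (Set.Ioi 0))

open MeasureTheory Set Topology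

theorem tendsto_add_left_nhdsGT_zero {H : Type*} [TopologicalSpace H] [AddCommGroup H]
    [PartialOrder H] [IsOrderedAddMonoid H] [ContinuousAdd H] (x : H) :
    Tendsto (x + ·) (𝓝[>] 0) (𝓝[>] x) := by
  have h := (map_add_left_nhdsGT (c := x) (a := (0 : H))).le
  rwa [add_zero] at h

theorem MonotoneOn.lowerRightDini_nonneg {f : ℝ → ℝ} {s : Set ℝ} {x : ℝ}
    (hf : MonotoneOn f s) (hx : x ∈ s) (hs : s ∈ 𝓝[>] x) : 0 ≤ lowerRightDini f x := by
  have hquot : ∀ᶠ ε in 𝓝[>] (0 : ℝ), 0 ≤ (f (x + ε) - f x) / ε := by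
    filter_upwards [tendsto_add_left_nhdsGT_zero x hs, self_mem_nhdsWithin]
      with ε hε (hε0 : 0 < ε)
    exact div_nonneg (sub_nonneg.2 (hf hx hε (by linarith))) hε0.le
  rw [lowerRightDini, liminf_eq]
  exact Real.sSup_nonneg' ⟨0, hquot, le_rfl⟩

theorem HasDerivWithinAt.lowerRightDini_eq {f : ℝ → ℝ} {f' x : ℝ}
    (hf : HasDerivWithinAt f f' (Ioi x) x) : lowerRightDini f x = f' := by
  have hslope := (hasDerivWithinAt_iff_tendsto_slope' (lt_irrefl x)).1 hf
  refine ((hslope.comp (tendsto_add_left_nhdsGT_zero x)).congr fun ε => ?_).liminf_eq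
  simp [slope_def_field]

theorem MonotoneOn.ae_lowerRightDini_eq_deriv {f : ℝ → ℝ} {s : Set ℝ} (hf : MonotoneOn f s) :
    ∀ᵐ x, x ∈ interior s → lowerRightDini f x = deriv f x := by
  filter_upwards [hf.ae_differentiableWithinAt_of_mem] with x hdiff hx
  have hd : DifferentiableAt ℝ f x :=
    (hdiff (interior_subset hx)).differentiableAt (mem_interior_iff_mem_nhds.1 hx)
  exact hd.hasDerivAt.hasDerivWithinAt.lowerRightDini_eq

theorem dini_fundamental_ineq (a b : ℝ) (hab : a < b) (f : ℝ → ℝ)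
    (hf : MonotoneOn f (Set.Icc a b)) :
    (∀ x ∈ Set.Ico a b, 0 ≤ lowerRightDini f x) ∧
    ∫ x in a..b, lowerRightDini f x ≤ f b - f a := by
  refine ⟨fun x hx => hf.lowerRightDini_nonneg (Ico_subset_Icc_self hx)
    (Icc_mem_nhdsGT_of_mem hx), ?_⟩
  have hDini : ∫ x in a..b, lowerRightDini f x = ∫ x in a..b, deriv f x := by
    refine intervalIntegral.integral_congr_ae ?_
    filter_upwards [hf.ae_lowerRightDini_eq_deriv, Measure.ae_ne volume b] with x hx hxb hxab
    rw [uIoc_of_le hab.le] at hxab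
    exact hx (by rw [interior_Icc]; exact ⟨hxab.1, lt_of_le_of_ne hxab.2 hxb⟩)
  have hfab : f a ≤ f b := hf (left_mem_Icc.2 hab.le) (right_mem_Icc.2 hab.le) hab.le
  have hderiv := (uIcc_of_le hab.le ▸ hf).intervalIntegral_deriv_mem_uIcc
  rw [uIcc_of_le (sub_nonneg.2 hfab)] at hderiv
  exact hDini ▸ hderiv.2
end
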